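/- Let K be a field of characteristic p > 0, S = K[x₁,…,xₙ], and let f ∈ S be a nonzero square-free supported polynomial. Then for every e ≥ 1, setting q = p^e, the polynomial f^{q−1} does not belong to the ideal (x₁^q, …, xₙ^q) of S. (By Fedder's criterion, this says that S/(f) is F-split along the maximal ideal (x₁,…,xₙ) whenever f ∈ (x₁,…,xₙ).) -/

import Mathlib

/-!
Membership in the monomial ideal `(x₁^q, …, xₙ^q)` is decided monomial by monomial: every monomial
in the support must be divisible by some `xᵢ^q`. A monomial of `f ^ (q - 1)` is a product of
`q - 1` square-free monomials, so each variable occurs in it with exponent at most `q - 1 < q`,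
and `f ^ (q - 1) ≠ 0` has at least one monomial.
-/

/-- A multivariate polynomial is *square-free supported* if every monomial in its support
is square-free, i.e. every variable occurs with exponent at most `1`. -/
def SquarefreeSupported {R : Type*} [CommSemiring R] {n : ℕ}
    (f : MvPolynomial (Fin n) R) : Prop :=
  ∀ m ∈ f.support, ∀ i : Fin n, m i ≤ 1

namespace MvPolynomial

variable {σ R : Type*}

theorem mem_span_range_X_pow_iff [CommSemiring R] {x : MvPolynomial σ R} (q : ℕ) :
    x ∈ Ideal.span (Set.range fun i : σ => (X i : MvPolynomial σ R) ^ q) ↔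
      ∀ m ∈ x.support, ∃ i, q ≤ m i := by
  have hspan : (Set.range fun i : σ => (X i : MvPolynomial σ R) ^ q) =
      (fun s => monomial s (1 : R)) '' Set.range fun i => Finsupp.single i q := by
    rw [← Set.range_comp]
    simp only [Function.comp_def, X_pow_eq_monomial]
  simp only [hspan, mem_ideal_span_monomial_image, Set.exists_range_iff, Finsupp.single_le_iff]

theorem pow_notMem_span_range_X_pow [CommRing R] [IsDomain R] {f : MvPolynomial σ R}
    (hf : f ≠ 0) (hdeg : ∀ i, degreeOf i f ≤ 1) {k q : ℕ} (hk : k < q) :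
    f ^ k ∉ Ideal.span (Set.range fun i : σ => (X i : MvPolynomial σ R) ^ q) := by
  rw [mem_span_range_X_pow_iff]
  intro hmem
  obtain ⟨m, hm⟩ := support_nonempty.mpr (pow_ne_zero k hf)
  obtain ⟨i, hi⟩ := hmem m hm
  have hmi : m i ≤ k :=
    calc m i ≤ degreeOf i (f ^ k) := monomial_le_degreeOf i hm
      _ ≤ k * degreeOf i f := degreeOf_pow_le i f k
      _ ≤ k := by simpa using Nat.mul_le_mul_left k (hdeg i)
  omega

end MvPolynomial

open MvPolynomial

theorem SquarefreeSupported.degreeOf_le_one {R : Type*} [CommSemiring R] {n : ℕ}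
    {f : MvPolynomial (Fin n) R} (hsq : SquarefreeSupported f) (i : Fin n) :
    degreeOf i f ≤ 1 := by
  rw [degreeOf_eq_sup, Finset.sup_le_iff]
  exact fun m hm => hsq m hm i

theorem fedder_of_squarefreeSupported_general {K : Type*} [Field K] {p : ℕ} (hp : p.Prime)
    {n : ℕ} (f : MvPolynomial (Fin n) K) (hf : f ≠ 0)
    (hsq : SquarefreeSupported f) (e : ℕ) :
    f ^ (p ^ e - 1) ∉
      Ideal.span (Set.range fun i : Fin n =>
        (MvPolynomial.X i : MvPolynomial (Fin n) K) ^ (p ^ e)) :=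
  pow_notMem_span_range_X_pow hf hsq.degreeOf_le_one
    (Nat.sub_one_lt (pow_ne_zero e hp.ne_zero))

/-- In characteristic `p > 0`, if `f ≠ 0` is square-free supported, then
for every `e ≥ 1` and `q = p^e`, the power `f^(q−1)` is not in the ideal
`(x₁^q, …, xₙ^q)` (Fedder's criterion: `S/(f)` is F-split at `(x₁,…,xₙ)`). -/
theorem fedder_of_squarefreeSupported {K : Type*} [Field K] {p : ℕ} (hp : p.Prime)
    [CharP K p] {n : ℕ} (f : MvPolynomial (Fin n) K) (hf : f ≠ 0)
    (hsq : SquarefreeSupported f) (e : ℕ) (he : 1 ≤ e) :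
    f ^ (p ^ e - 1) ∉
      Ideal.span (Set.range fun i : Fin n =>
        (MvPolynomial.X i : MvPolynomial (Fin n) K) ^ (p ^ e)) :=
  fedder_of_squarefreeSupported_general hp f hf hsq e
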